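/- The interpretation of the probabilistic propositional logic in Γ-valued measures is sound for rule (L4): if μ is a Γ-valued measure on a bounded distributive lattice D, a,b ∈ D, p,q,r ∈ ℚ∩[0,1] with 0 ≤ p+q−r ≤ 1, and μ(a) ≥ p° and μ(b) ≥ q°, then μ(a∨b) ≥ (p+q−r)° or μ(a∧b) ≥ r°. -/

import Mathlib

open scoped Classical

/-- The carrier of the "doubled unit interval" `Γ`: pairs `(r, b)` ordered
lexicographically, where `b = true` represents an exact value `r°`
(which must be rational) and `b = false` represents an approximation `r⁻`
(which must satisfy `r > 0`). -/
def GammaCarrier : Set (Lex (ℝ × Bool)) :=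
  {p | 0 ≤ (ofLex p).1 ∧ (ofLex p).1 ≤ 1 ∧
    ((ofLex p).2 = true → ∃ q : ℚ, (q : ℝ) = (ofLex p).1) ∧
    ((ofLex p).2 = false → 0 < (ofLex p).1)}

/-- The doubled unit interval `Γ`, with the (total) order inherited from the
lexicographic product: `r* < s*` iff `r < s`, and `q⁻ < q°` immediately. -/
abbrev Gamma : Type := {p : Lex (ℝ × Bool) // p ∈ GammaCarrier}

theorem mem_gammaCarrier {a : ℝ} {b : Bool} (h1 : 0 ≤ a) (h2 : a ≤ 1)
    (h3 : b = true → ∃ q : ℚ, (q : ℝ) = a) (h4 : b = false → 0 < a) :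
    toLex (a, b) ∈ GammaCarrier := ⟨h1, h2, h3, h4⟩

/-- The underlying real number of an element of `Γ` (the map `γ`). -/
def γmap (x : Gamma) : ℝ := (ofLex x.1).1

/-- An element of `Γ` is exact iff it is of `°`-type. -/
def gexact (x : Gamma) : Prop := (ofLex x.1).2 = true

theorem gmem (x : Gamma) : 0 ≤ (ofLex x.1).1 ∧ (ofLex x.1).1 ≤ 1 ∧
    ((ofLex x.1).2 = true → ∃ q : ℚ, (q : ℝ) = (ofLex x.1).1) ∧
    ((ofLex x.1).2 = false → 0 < (ofLex x.1).1) := x.2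

/-- Smart constructor for `Γ`: clamps `r` into `[0,1]`, and produces the exact
value `r°` if `e = true` and `r` is rational (or `r = 0`), and `r⁻` otherwise. -/
noncomputable def mk' (r : ℝ) (e : Bool) : Gamma :=
  if h : (e = true ∧ ∃ q : ℚ, (q : ℝ) = max 0 (min 1 r)) ∨ max 0 (min 1 r) = 0 then
    ⟨toLex (max 0 (min 1 r), true),
      mem_gammaCarrier (le_max_left 0 _) (max_le zero_le_one (min_le_left 1 r))
        (fun _ => h.elim (fun h' => h'.2) (fun h0 => ⟨0, by rw [h0]; norm_num⟩))
        (fun hc => absurd hc (by simp))⟩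
  else
    ⟨toLex (max 0 (min 1 r), false),
      mem_gammaCarrier (le_max_left 0 _) (max_le zero_le_one (min_le_left 1 r))
        (fun hc => absurd hc (by simp))
        (fun _ => lt_of_le_of_ne (le_max_left 0 _) (fun h0 => h (Or.inr h0.symm)))⟩

/-- `0°`, the bottom element of `Γ`. -/
noncomputable def gzero : Gamma := mk' 0 true
/-- `1°`, the top element of `Γ`. -/
noncomputable def gone : Gamma := mk' 1 true
/-- The section `ι° : [0,1] → Γ`, `r ↦ r°` for rational `r` and `r ↦ r⁻` otherwise. -/
noncomputable def icircR (r : ℝ) : Gamma := mk' r true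
/-- The section `ι⁻ : [0,1] → Γ`, `0 ↦ 0°` and `r ↦ r⁻` for `r > 0`. -/
noncomputable def iminusR (r : ℝ) : Gamma := mk' r false
/-- The exact value `q°` of a rational `q ∈ [0,1]`. -/
noncomputable def gq (q : ℚ) : Gamma := mk' (q : ℝ) true
/-- `ι°` as a map on the unit interval. -/
noncomputable def icirc (r : Set.Icc (0:ℝ) 1) : Gamma := icircR r.1
/-- `ι⁻` as a map on the unit interval. -/
noncomputable def iminusI (r : Set.Icc (0:ℝ) 1) : Gamma := iminusR r.1
/-- `γ : Γ → [0,1]` as a map into the unit interval. -/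
noncomputable def gmapI (x : Gamma) : Set.Icc (0:ℝ) 1 := ⟨γmap x, (gmem x).1, (gmem x).2.1⟩

/-- The partial subtraction `∸` on `Γ` (meaningful when `y ≤ x`):
`r° ∸ s° = (r−s)°`, `r⁻ ∸ s° = (r−s)⁻`, and `r* ∸ s⁻ = (r−s)°` if `r−s ∈ ℚ`,
`(r−s)⁻` otherwise. -/
noncomputable def gsub (x y : Gamma) : Gamma :=
  mk' (γmap x - γmap y)
    (if (gexact x ∧ gexact y) ∨ (¬ gexact y ∧ ∃ q : ℚ, (q : ℝ) = γmap x - γmap y)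
      then true else false)

/-- The second partial subtraction `∸̃` on `Γ` (meaningful when `y ≤ x`):
`x ∸̃ x = 0°` and, for `y < x`, `r° ∸̃ s° = r⁻ ∸̃ s⁻ = r⁻ ∸̃ s° = (r−s)⁻` and
`r° ∸̃ s⁻ = (r−s)°` if `r−s ∈ ℚ`, `(r−s)⁻` otherwise. -/
noncomputable def gsubt (x y : Gamma) : Gamma :=
  mk' (γmap x - γmap y)
    (if gexact x ∧ ¬ gexact y ∧ ∃ q : ℚ, (q : ℝ) = γmap x - γmap y then true else false)

/-- The partial addition `+` on `Γ` (meaningful when `x ≤ 1° ∸ y`):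
`r° + s° = (r+s)°` and any sum involving a `⁻`-argument is of `⁻`-type. -/
noncomputable def gadd (x y : Gamma) : Gamma :=
  mk' (γmap x + γmap y) (if gexact x ∧ gexact y then true else false)

/-- A `Γ`-valued (finitely additive, probability) measure on a bounded lattice. -/
def IsGMeasure {D : Type*} [Lattice D] [BoundedOrder D] (μ : D → Gamma) : Prop :=
  Monotone μ ∧ μ ⊥ = gzero ∧ μ ⊤ = gone ∧
  ∀ a b : D, gsubt (μ a) (μ (a ⊓ b)) ≤ gsub (μ (a ⊔ b)) (μ b) ∧
    gsubt (μ (a ⊔ b)) (μ b) ≤ gsub (μ a) (μ (a ⊓ b))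

/-!
Suppose both conclusions fail. On underlying reals a `Γ`-valued measure is modular,
`γ μ(a ∨ b) + γ μ(a ∧ b) = γ μ(a) + γ μ(b)`, so the four bounds `p ≤ γ μ(a)`, `q ≤ γ μ(b)`,
`γ μ(a ∨ b) ≤ p + q - r`, `γ μ(a ∧ b) ≤ r` are all equalities, which pins the values down to
`μ(a) = p°`, `μ(b) = q°`, `μ(a ∨ b) = (p + q - r)⁻`, `μ(a ∧ b) = r⁻`. If `r = p` this contradicts
`μ(b) ≤ μ(a ∨ b)`; if `r < p` it contradicts the measure axiom, since then
`μ(a) ∸̃ μ(a ∧ b) = (p - r)°` while `μ(a ∨ b) ∸ μ(b) = (p - r)⁻`.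
-/

theorem gamma_le_iff {x y : Gamma} :
    x ≤ y ↔ γmap x < γmap y ∨ (γmap x = γmap y ∧ (gexact x → gexact y)) := by
  change x.1 ≤ y.1 ↔ _
  rw [Prod.Lex.le_iff, Bool.le_iff_imp]
  rfl

theorem γmap_nonneg (x : Gamma) : 0 ≤ γmap x := (gmem x).1

theorem γmap_le_one (x : Gamma) : γmap x ≤ 1 := (gmem x).2.1

theorem γmap_mono {x y : Gamma} (h : x ≤ y) : γmap x ≤ γmap y := by
  rcases gamma_le_iff.1 h with h | h
  · exact h.le
  · exact h.1.le

theorem gexact_of_le_of_γmap_eq {x y : Gamma} (h : x ≤ y) (hγ : γmap x = γmap y)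
    (hx : gexact x) : gexact y := by
  rcases gamma_le_iff.1 h with h | h
  · exact absurd hγ h.ne
  · exact h.2 hx

theorem le_of_γmap_eq_of_gexact {x y : Gamma} (hγ : γmap x = γmap y) (hy : gexact y) :
    x ≤ y :=
  gamma_le_iff.2 (Or.inr ⟨hγ, fun _ => hy⟩)

theorem γmap_mk' {r : ℝ} (e : Bool) (h0 : 0 ≤ r) (h1 : r ≤ 1) : γmap (mk' r e) = r := by
  have hr : max 0 (min 1 r) = r := by rw [min_eq_right h1, max_eq_right h0]
  unfold mk'
  split <;> exact hr

theorem gexact_mk'_iff {r : ℝ} (e : Bool) (h0 : 0 < r) (h1 : r ≤ 1) :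
    gexact (mk' r e) ↔ e = true ∧ ∃ q : ℚ, (q : ℝ) = r := by
  have hr : max 0 (min 1 r) = r := by rw [min_eq_right h1, max_eq_right h0.le]
  unfold mk'
  simp only [hr, h0.ne', or_false]
  split
  · simpa [gexact]
  · rename_i h
    simpa [gexact] using fun he q hq => h ⟨he, q, hq⟩

theorem γmap_gq {s : ℚ} (h0 : 0 ≤ s) (h1 : s ≤ 1) : γmap (gq s) = s :=
  γmap_mk' true (by exact_mod_cast h0) (by exact_mod_cast h1)

theorem gexact_gq (s : ℚ) : gexact (gq s) := by
  unfold gq mk'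
  split
  · rfl
  · rename_i h
    exact absurd (Or.inl ⟨rfl, max 0 (min 1 s), by push_cast; rfl⟩) h

theorem le_γmap_of_gq_le {s : ℚ} (h0 : 0 ≤ s) (h1 : s ≤ 1) {x : Gamma} (h : gq s ≤ x) :
    (s : ℝ) ≤ γmap x :=
  γmap_gq h0 h1 ▸ γmap_mono h

theorem γmap_le_of_lt_gq {s : ℚ} (h0 : 0 ≤ s) (h1 : s ≤ 1) {x : Gamma} (h : x < gq s) :
    γmap x ≤ s :=
  γmap_gq h0 h1 ▸ γmap_mono h.le

theorem not_gexact_of_lt_gq {s : ℚ} (h0 : 0 ≤ s) (h1 : s ≤ 1) {x : Gamma} (h : x < gq s)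
    (hx : γmap x = s) : ¬ gexact x := fun hex =>
  h.not_ge (le_of_γmap_eq_of_gexact (by rw [γmap_gq h0 h1, hx]) hex)

section Subtraction

variable {x y : Gamma}

theorem γmap_sub_mem (h : γmap y ≤ γmap x) : 0 ≤ γmap x - γmap y ∧ γmap x - γmap y ≤ 1 :=
  ⟨sub_nonneg.2 h, by linarith [γmap_le_one x, γmap_nonneg y]⟩

theorem γmap_gsub (h : γmap y ≤ γmap x) : γmap (gsub x y) = γmap x - γmap y :=
  γmap_mk' _ (γmap_sub_mem h).1 (γmap_sub_mem h).2

theorem γmap_gsubt (h : γmap y ≤ γmap x) : γmap (gsubt x y) = γmap x - γmap y :=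
  γmap_mk' _ (γmap_sub_mem h).1 (γmap_sub_mem h).2

theorem not_gexact_gsub (hx : ¬ gexact x) (hy : gexact y) (h : γmap y < γmap x) :
    ¬ gexact (gsub x y) := by
  rw [gsub, gexact_mk'_iff _ (by linarith) (γmap_sub_mem h.le).2]
  simp [hx, hy]

theorem gexact_gsubt (hx : gexact x) (hy : ¬ gexact y) (h : γmap y < γmap x)
    (hq : ∃ q : ℚ, (q : ℝ) = γmap x - γmap y) : gexact (gsubt x y) := by
  rw [gsubt, gexact_mk'_iff _ (by linarith) (γmap_sub_mem h.le).2]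
  simp [hx, hy, hq]

theorem not_gsubt_le_gsub {z w : Gamma} (hx : gexact x) (hy : ¬ gexact y) (hz : ¬ gexact z)
    (hw : gexact w) (hyx : γmap y < γmap x) (hwz : γmap w ≤ γmap z)
    (heq : γmap x - γmap y = γmap z - γmap w) (hq : ∃ q : ℚ, (q : ℝ) = γmap x - γmap y) :
    ¬ gsubt x y ≤ gsub z w := fun h =>
  not_gexact_gsub hz hw (by linarith)
    (gexact_of_le_of_γmap_eq h (by rw [γmap_gsubt hyx.le, γmap_gsub hwz, heq])
      (gexact_gsubt hx hy hyx hq))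

end Subtraction

theorem IsGMeasure.γmap_sup_add_γmap_inf {D : Type*} [Lattice D] [BoundedOrder D]
    {μ : D → Gamma} (hμ : IsGMeasure μ) (a b : D) :
    γmap (μ (a ⊔ b)) + γmap (μ (a ⊓ b)) = γmap (μ a) + γmap (μ b) := by
  have hmono : Monotone μ := hμ.1
  have hinf := γmap_mono (hmono (inf_le_left : a ⊓ b ≤ a))
  have hsup := γmap_mono (hmono (le_sup_right : b ≤ a ⊔ b))
  have h₁ := γmap_mono (hμ.2.2.2 a b).1
  have h₂ := γmap_mono (hμ.2.2.2 a b).2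
  rw [γmap_gsubt hinf, γmap_gsub hsup] at h₁
  rw [γmap_gsubt hsup, γmap_gsub hinf] at h₂
  linarith

/-- soundness of rule (L4): if `μ` is a `Γ`-valued measure on a
bounded distributive lattice `D`, `p, q, r ∈ ℚ ∩ [0,1]` with
`0 ≤ p + q − r ≤ 1`, `μ(a) ≥ p°` and `μ(b) ≥ q°`, then
`μ(a ∨ b) ≥ (p+q−r)°` or `μ(a ∧ b) ≥ r°`. -/
theorem stmt_19 {D : Type*} [DistribLattice D] [BoundedOrder D]
    (μ : D → Gamma) (hμ : IsGMeasure μ) (a b : D) (p q r : ℚ)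
    (hp0 : 0 ≤ p) (hp1 : p ≤ 1) (hq0 : 0 ≤ q) (hq1 : q ≤ 1)
    (hr0 : 0 ≤ r) (hr1 : r ≤ 1)
    (h1 : 0 ≤ p + q - r) (h2 : p + q - r ≤ 1)
    (ha : gq p ≤ μ a) (hb : gq q ≤ μ b) :
    gq (p + q - r) ≤ μ (a ⊔ b) ∨ gq r ≤ μ (a ⊓ b) := by
  by_contra! h
  obtain ⟨hsup, hinf⟩ := h
  have hmod := hμ.γmap_sup_add_γmap_inf a b
  have hpa := le_γmap_of_gq_le hp0 hp1 ha
  have hqb := le_γmap_of_gq_le hq0 hq1 hb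
  have hsup_le := γmap_le_of_lt_gq h1 h2 hsup
  have hinf_le := γmap_le_of_lt_gq hr0 hr1 hinf
  push_cast at hsup_le
  have hA : γmap (μ a) = p := by linarith
  have hB : γmap (μ b) = q := by linarith
  have hS : γmap (μ (a ⊔ b)) = p + q - r := by linarith
  have hI : γmap (μ (a ⊓ b)) = r := by linarith
  have exA := gexact_of_le_of_γmap_eq ha (by rw [hA, γmap_gq hp0 hp1]) (gexact_gq p)
  have exB := gexact_of_le_of_γmap_eq hb (by rw [hB, γmap_gq hq0 hq1]) (gexact_gq q)
  have inexS := not_gexact_of_lt_gq h1 h2 hsup (by rw [hS]; push_cast; ring)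
  have inexI := not_gexact_of_lt_gq hr0 hr1 hinf hI
  have hbS := hμ.1 (le_sup_right : b ≤ a ⊔ b)
  rcases (show (r : ℝ) ≤ p by linarith [γmap_mono hbS]).eq_or_lt with hrp | hrp
  · exact inexS (gexact_of_le_of_γmap_eq hbS (by linarith) exB)
  · exact not_gsubt_le_gsub exA inexI inexS exB (by linarith) (by linarith) (by linarith)
      ⟨p - r, by rw [hA, hI]; push_cast; ring⟩ (hμ.2.2.2 a b).1
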